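/- arXiv:2008.01829 — 4 statements merged into one kernel-verified Lean document; each statement's English description precedes it below -/
import Mathlib

section
/- Let f : ℂ → ℂ be continuously differentiable over ℝ (ContDiff ℝ 1 f) with compact support, and let x ∈ ℂ. Then ∫ w, (∂̄f)(w) / (w - x) ∂volume = -π * f x, where ∂̄f(w) := (fderiv ℝ f w 1 + Complex.I * fderiv ℝ f w Complex.I) / 2. -/
open MeasureTheory

/-- The Wirtinger antiholomorphic derivative `∂̄f` of `f : ℂ → ℂ` viewed as ℝ-differentiable. -/
noncomputable def dbar (f : ℂ → ℂ) (w : ℂ) : ℂ :=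
  (fderiv ℝ f w 1 + Complex.I * fderiv ℝ f w Complex.I) / 2

/-!
In polar coordinates `w = x + r e^{iθ}` the Jacobian `r` cancels the singularity of the kernel:
`r ∂̄f(w) / (w - x) = (∂_r F + (i / r) ∂_θ F) / 2` with `F(r, θ) = f(x + r e^{iθ})`.
The angular term integrates to zero over a full period, while on every ray the radial term
integrates to `-f x`, so the integral is `2π · (-f x) / 2`.
-/

open Set Complex ComplexConjugate
open scoped Real

theorem ContinuousLinearMap.apply_add_I_mul_apply_mul_I (L : ℂ →L[ℝ] ℂ) (u : ℂ) :
    L u + I * L (u * I) = conj u * (L 1 + I * L I) := by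
  have hL (a b : ℝ) : L (a + b * I) = a * L 1 + b * L I := by
    rw [show (a : ℂ) + b * I = a • (1 : ℂ) + b • I by simp [Complex.real_smul], map_add,
      map_smul, map_smul, Complex.real_smul, Complex.real_smul]
  have hu : L u = u.re * L 1 + u.im * L I := by simpa using hL u.re u.im
  have huI : L (u * I) = -u.im * L 1 + u.re * L I := by
    rw [show u * I = ((-u.im : ℝ) : ℂ) + u.re * I by apply Complex.ext <;> simp, hL]
    push_cast
    ring
  have hconj : conj u = u.re - u.im * I := by apply Complex.ext <;> simp
  rw [hu, huI, hconj]
  linear_combination (u.im * L I) * I_sq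

theorem smul_dbar_div_circleMap (f : ℂ → ℂ) (x : ℂ) {r : ℝ} (hr : r ≠ 0) (θ : ℝ) :
    r • (dbar f (circleMap x r θ) / circleMap 0 r θ) =
      (fderiv ℝ f (circleMap x r θ) (exp (θ * I)) +
        I * fderiv ℝ f (circleMap x r θ) (exp (θ * I) * I)) / 2 := by
  have hr' : (r : ℂ) ≠ 0 := ofReal_ne_zero.mpr hr
  have hinv : (exp (θ * I))⁻¹ = conj (exp (θ * I)) := by
    rw [← Complex.exp_conj, ← Complex.exp_neg]
    simp
  rw [dbar, circleMap_zero, Complex.real_smul]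
  set L := fderiv ℝ f (circleMap x r θ)
  calc (r : ℂ) * ((L 1 + I * L I) / 2 / (r * exp (θ * I)))
      = conj (exp (θ * I)) * ((L 1 + I * L I) / 2) := by
        rw [← hinv]
        field_simp
    _ = _ := by rw [mul_div_assoc', ← L.apply_add_I_mul_apply_mul_I]

theorem HasCompactSupport.integral_Ioi_fderiv_add_smul_eq {E F : Type*} [NormedAddCommGroup E]
    [NormedSpace ℝ E] [NormedAddCommGroup F] [NormedSpace ℝ F] [CompleteSpace F] {g : E → F}
    (hg : ContDiff ℝ 1 g) (hgsupp : HasCompactSupport g) (x : E) {v : E} (hv : v ≠ 0) :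
    ∫ r in Ioi (0 : ℝ), fderiv ℝ g (x + r • v) v = -g x := by
  have hG : ContDiff ℝ 1 (fun r : ℝ => g (x + r • v)) := hg.comp (by fun_prop)
  have hGsupp : HasCompactSupport (fun r : ℝ => g (x + r • v)) :=
    hgsupp.comp_isClosedEmbedding
      ((Homeomorph.addLeft x).isClosedEmbedding.comp (isClosedEmbedding_smul_left hv))
  have hderiv (r : ℝ) : deriv (fun r : ℝ => g (x + r • v)) r = fderiv ℝ g (x + r • v) v := by
    have := (hg.differentiable one_ne_zero _).hasFDerivAt.comp_hasDerivAt r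
      (((hasDerivAt_id r).smul_const v).const_add x)
    rw [one_smul] at this
    exact this.deriv
  simpa [hderiv] using hGsupp.integral_Ioi_deriv_eq hG 0

theorem integral_fderiv_circleMap_apply_exp_mul_I_eq_zero {F : Type*} [NormedAddCommGroup F]
    [NormedSpace ℝ F] [CompleteSpace F] {g : ℂ → F} (hg : ContDiff ℝ 1 g) (x : ℂ) {R : ℝ}
    (hR : R ≠ 0) :
    ∫ θ in -π..π, fderiv ℝ g (circleMap x R θ) (exp (θ * I) * I) = 0 := by
  have hderiv (θ : ℝ) : HasDerivAt (fun θ => g (circleMap x R θ))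
      (R • fderiv ℝ g (circleMap x R θ) (exp (θ * I) * I)) θ := by
    have := (hg.differentiable one_ne_zero _).hasFDerivAt.comp_hasDerivAt θ
      (hasDerivAt_circleMap x R θ)
    rwa [circleMap_zero, mul_assoc, ← Complex.real_smul, map_smul] at this
  have hcont : Continuous fun θ : ℝ => fderiv ℝ g (circleMap x R θ) (exp (θ * I) * I) := by
    have := hg.continuous_fderiv one_ne_zero
    fun_prop
  have hftc := intervalIntegral.integral_eq_sub_of_hasDerivAt (a := -π) (b := π)
    (fun θ _ => hderiv θ) ((hcont.const_smul R).intervalIntegrable _ _)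
  have hperiod : circleMap x R π = circleMap x R (-π) := by
    simpa [show -π + 2 * π = π by ring] using periodic_circleMap x R (-π)
  rw [intervalIntegral.integral_smul, hperiod, sub_self, smul_eq_zero] at hftc
  exact hftc.resolve_left hR

theorem Complex.polarCoord_symm_eq_circleMap (p : ℝ × ℝ) :
    Complex.polarCoord.symm p = circleMap 0 p.1 p.2 := by
  simp [circleMap, Complex.exp_mul_I]

theorem integrableOn_polarCoord_target {E : Type*} [NormedAddCommGroup E] {h : ℝ × ℝ → E}
    (hh : Continuous h) {R : ℝ} (hR : ∀ p : ℝ × ℝ, R < p.1 → h p = 0) :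
    IntegrableOn h polarCoord.target := by
  refine (hh.continuousOn.integrableOn_compact
    (isCompact_Icc.prod isCompact_Icc : IsCompact (Icc 0 R ×ˢ Icc (-π) π))).of_forall_sdiff_eq_zero
    polarCoord.open_target.measurableSet fun p ⟨⟨hr, hθ⟩, hpK⟩ => hR p ?_
  by_contra! hle
  exact hpK ⟨⟨hr.le, hle⟩, Ioo_subset_Icc_self hθ⟩

theorem MeasureTheory.setIntegral_prod_symm {α β E : Type*} [MeasurableSpace α]
    [MeasurableSpace β] [NormedAddCommGroup E] [NormedSpace ℝ E] {μ : Measure α} {ν : Measure β}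
    [SFinite μ] [SFinite ν] (f : α × β → E) {s : Set α} {t : Set β}
    (hf : IntegrableOn f (s ×ˢ t) (μ.prod ν)) :
    ∫ z in s ×ˢ t, f z ∂μ.prod ν = ∫ y in t, ∫ x in s, f (x, y) ∂μ ∂ν := by
  rw [← setIntegral_prod_swap]
  exact setIntegral_prod _ hf.swap

theorem HasCompactSupport.exists_circleMap_eq_zero {G : Type*} [Zero G] {h : ℂ → G}
    (hh : HasCompactSupport h) (x : ℂ) :
    ∃ R : ℝ, ∀ r θ : ℝ, R < r → h (circleMap x r θ) = 0 := by
  obtain ⟨R, hR⟩ := hh.isCompact.isBounded.subset_closedBall x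
  refine ⟨R, fun r θ hr => image_eq_zero_of_notMem_tsupport fun hmem => ?_⟩
  have hdist : dist (circleMap x r θ) x ≤ R := hR hmem
  rw [Metric.mem_sphere.mp (circleMap_mem_sphere' x r θ)] at hdist
  linarith [le_abs_self r]

section PolarIntegrals

variable {F : Type*} [NormedAddCommGroup F] [NormedSpace ℝ F] {f : ℂ → F}

theorem integrableOn_polarCoord_target_fderiv_circleMap (hf : ContDiff ℝ 1 f)
    (hsupp : HasCompactSupport f) (x : ℂ) {u : ℝ → ℂ} (hu : Continuous u) :
    IntegrableOn (fun p : ℝ × ℝ => fderiv ℝ f (circleMap x p.1 p.2) (u p.2))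
      polarCoord.target := by
  obtain ⟨R, hR⟩ := (hsupp.fderiv (𝕜 := ℝ)).exists_circleMap_eq_zero x
  have := hf.continuous_fderiv one_ne_zero
  refine integrableOn_polarCoord_target (R := R) ?_ fun p hp => by simp [hR p.1 p.2 hp]
  simp only [circleMap]
  fun_prop

variable [CompleteSpace F]

theorem setIntegral_polarCoord_target_fderiv_radial (hf : ContDiff ℝ 1 f)
    (hsupp : HasCompactSupport f) (x : ℂ) :
    ∫ p in polarCoord.target, fderiv ℝ f (circleMap x p.1 p.2) (exp (p.2 * I)) =
      -(2 * π) • f x := by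
  rw [polarCoord_target, Measure.volume_eq_prod, setIntegral_prod_symm _
    (integrableOn_polarCoord_target_fderiv_circleMap hf hsupp x (u := fun θ => exp (θ * I))
      (by fun_prop))]
  have hray (θ : ℝ) : ∫ r in Ioi (0 : ℝ), fderiv ℝ f (circleMap x r θ) (exp (θ * I)) = -f x := by
    simpa [circleMap, Complex.real_smul] using
      hsupp.integral_Ioi_fderiv_add_smul_eq hf x (exp_ne_zero (θ * I))
  simp_rw [hray]
  rw [setIntegral_const, Real.volume_real_Ioo_of_le (by linarith [Real.pi_pos])]
  module

theorem setIntegral_polarCoord_target_fderiv_angular (hf : ContDiff ℝ 1 f)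
    (hsupp : HasCompactSupport f) (x : ℂ) :
    ∫ p in polarCoord.target, fderiv ℝ f (circleMap x p.1 p.2) (exp (p.2 * I) * I) = 0 := by
  rw [polarCoord_target, Measure.volume_eq_prod, setIntegral_prod _
    (integrableOn_polarCoord_target_fderiv_circleMap hf hsupp x (u := fun θ => exp (θ * I) * I)
      (by fun_prop))]
  refine (setIntegral_congr_fun measurableSet_Ioi fun r hr => ?_).trans (integral_zero _ _)
  rw [← integral_Ioc_eq_integral_Ioo,
    ← intervalIntegral.integral_of_le (by linarith [Real.pi_pos]),
    integral_fderiv_circleMap_apply_exp_mul_I_eq_zero hf x hr.ne']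

end PolarIntegrals

/-- Cauchy–Pompeiu formula for compactly supported `C¹` functions. -/
theorem cauchy_pompeiu_compact_support (f : ℂ → ℂ) (hf : ContDiff ℝ 1 f)
    (hsupp : HasCompactSupport f) (x : ℂ) :
    ∫ w : ℂ, dbar f w / (w - x) ∂volume = -(Real.pi : ℂ) * f x := by
  have hint_radial := integrableOn_polarCoord_target_fderiv_circleMap hf hsupp x
    (u := fun θ => exp (θ * I)) (by fun_prop)
  have hint_angular := integrableOn_polarCoord_target_fderiv_circleMap hf hsupp x
    (u := fun θ => exp (θ * I) * I) (by fun_prop)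
  calc ∫ w, dbar f w / (w - x)
      = ∫ w, dbar f (w + x) / w := by
        rw [← integral_add_right_eq_self _ x]
        simp_rw [add_sub_cancel_right]
    _ = ∫ p in polarCoord.target, (fderiv ℝ f (circleMap x p.1 p.2) (exp (p.2 * I)) +
          I * fderiv ℝ f (circleMap x p.1 p.2) (exp (p.2 * I) * I)) / 2 := by
        rw [← Complex.integral_comp_polarCoord_symm]
        refine setIntegral_congr_fun polarCoord.open_target.measurableSet fun p hp => ?_
        rw [polarCoord_symm_eq_circleMap, ← smul_dbar_div_circleMap f x hp.1.ne',
          ← circleMap_sub_center x, sub_add_cancel]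
    _ = -π * f x := by
      rw [integral_div, integral_add hint_radial (hint_angular.const_mul I), integral_const_mul,
        setIntegral_polarCoord_target_fderiv_radial hf hsupp x,
        setIntegral_polarCoord_target_fderiv_angular hf hsupp x, Complex.real_smul]
      push_cast
      ring
end

section
/- Let S, z : Finset ℂ with (↑z : Set ℂ) ∩ (↑S : Set ℂ) = ∅, and let C be the subtype {w : ℂ // w ∉ S} with the subspace topology. Let G be a topological group which is simply connected (SimplyConnectedSpace G). Then for every continuous map g : C(C, G) such that g c = 1 for every c : C with (c : ℂ) ∈ z, there exists a homotopy relative to the set {c : C | (c : ℂ) ∈ z} between g and the constant map with value 1; that is, Nonempty (ContinuousMap.HomotopyRel g (ContinuousMap.const C 1) {c : C | (c : ℂ) ∈ z}). -/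
/-!
Every map `ℂ ∖ S → G` is null-homotopic, by induction on `S`. Around a new puncture `s₀`, the
loop that `g` traces on a small circle is null-homotopic in `G`, and a null-homotopy descends along
the polar coordinates `I × I → closedBall s₀ ε` to a filling of the disk, so `g` agrees off the
disk with a map `g'` defined across `s₀`. Then `g = g' * (g'⁻¹ * g)`, where `g'` is null-homotopic
by induction and `g'⁻¹ * g` is trivial off the disk, hence null-homotopic by pushing the punctured
disk radially onto its boundary circle.

A free null-homotopy `H` is then made stationary at the points of `z` one at a time: at `c`,
multiply `H (t, x)` by the inverse of `F (χ x, t)`, where `F` is a null-homotopy of the loop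
`t ↦ H (t, c)` and `χ : C → [0, 1]` vanishes at `c` and equals `1` at the points already treated.
-/

open unitInterval Set Metric Real ContinuousMap

namespace ContinuousMap

variable {X : Type*} [TopologicalSpace X]

theorem Homotopic.mul {M : Type*} [TopologicalSpace M] [Mul M] [ContinuousMul M]
    {f₀ f₁ g₀ g₁ : C(X, M)} (hf : f₀.Homotopic f₁) (hg : g₀.Homotopic g₁) :
    (f₀ * g₀).Homotopic (f₁ * g₁) := by
  obtain ⟨F⟩ := hf
  obtain ⟨G⟩ := hg
  exact ⟨{ toContinuousMap := F.toContinuousMap * G.toContinuousMap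
           map_zero_left := by simp
           map_one_left := by simp }⟩

theorem homotopic_const_of_contractibleSpace [ContractibleSpace X] {Y : Type*}
    [TopologicalSpace Y] [PathConnectedSpace Y] (f : C(X, Y)) (y : Y) :
    f.Homotopic (const X y) := by
  obtain ⟨y₀, hy₀⟩ := (id_nullhomotopic X).comp_right f
  exact hy₀.trans ⟨(PathConnectedSpace.somePath y₀ y).toHomotopyConst⟩

variable {G : Type*} [TopologicalSpace G] [Group G] [IsTopologicalGroup G]
  [SimplyConnectedSpace G]

theorem HomotopicRel.insert [CompletelyRegularSpace X] {f₀ f₁ : C(X, G)} {T : Set X}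
    (h : f₀.HomotopicRel f₁ T) (hT : IsClosed T) {c : X} (hcT : c ∉ T) (hc : f₀ c = f₁ c) :
    f₀.HomotopicRel f₁ (insert c T) := by
  obtain ⟨H⟩ := h
  obtain ⟨χ, hχ, hχc, hχT⟩ := CompletelyRegularSpace.completely_regular c T hT hcT
  obtain ⟨F⟩ := SimplyConnectedSpace.paths_homotopic ((H.evalAt c).cast rfl hc) (Path.refl _)
  refine ⟨{ toFun := fun p => H p * (F (χ p.2, p.1))⁻¹ * f₀ c
            continuous_toFun := by fun_prop
            map_zero_left := fun x => by simp
            map_one_left := fun x => by simp [hc]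
            prop' := ?_ }⟩
  rintro t x (rfl | hx)
  · simp [hχc]
  · simp [hχT hx, H.eq_fst t hx]

theorem Homotopic.homotopicRel_of_finite [CompletelyRegularSpace X] [T1Space X]
    {f₀ f₁ : C(X, G)} (h : f₀.Homotopic f₁) {T : Set X} (hT : T.Finite) (hfT : EqOn f₀ f₁ T) :
    f₀.HomotopicRel f₁ T := by
  induction T, hT using Set.Finite.induction_on with
  | empty => exact homotopicRel_empty.2 h
  | @insert c T hcT hT ih =>
    exact (ih (hfT.mono (subset_insert c T))).insert hT.isClosed hcT (hfT (mem_insert c T))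

end ContinuousMap

theorem exists_unitInterval_circleMap_eq {c w : ℂ} {R : ℝ} (hw : w ∈ sphere c |R|) :
    ∃ t : I, circleMap c R (2 * π * t) = w := by
  rw [← image_circleMap_Ioc] at hw
  obtain ⟨θ, ⟨hθ₀, hθ₁⟩, rfl⟩ := hw
  refine ⟨⟨θ / (2 * π), by positivity, div_le_one_of_le₀ hθ₁ (by positivity)⟩, ?_⟩
  congr 1
  field_simp

theorem eq_or_of_circleMap_eq {c : ℂ} {R : ℝ} (hR : R ≠ 0) {t t' : I}
    (h : circleMap c R (2 * π * t) = circleMap c R (2 * π * t')) :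
    t = t' ∨ (t = 0 ∧ t' = 1) ∨ (t = 1 ∧ t' = 0) := by
  rcases lt_or_ge |(t : ℝ) - t'| 1 with hlt | hge
  · left
    have hdist : |2 * π * t - 2 * π * t'| < 2 * π := by
      rw [← mul_sub, abs_mul, abs_of_pos two_pi_pos]
      exact mul_lt_of_lt_one_right two_pi_pos hlt
    exact Subtype.ext (mul_left_cancel₀ two_pi_pos.ne' (eq_of_circleMap_eq hR hdist h))
  · right
    rcases le_abs'.1 hge with hle | hle
    · left
      constructor <;> ext <;> push_cast <;> linarith [t.2.1, t'.2.2]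
    · right
      constructor <;> ext <;> push_cast <;> linarith [t.2.2, t'.2.1]

noncomputable def diskParam (c : ℂ) (r : ℝ) (p : I × I) : ℂ :=
  circleMap c (p.1 * r) (2 * π * p.2)

theorem continuous_diskParam (c : ℂ) (r : ℝ) : Continuous (diskParam c r) := by
  unfold diskParam circleMap; fun_prop

theorem dist_diskParam {c : ℂ} {r : ℝ} (hr : 0 ≤ r) (p : I × I) :
    dist (diskParam c r p) c = p.1 * r := by
  rw [diskParam, dist_eq_norm, circleMap_sub_center, norm_circleMap_zero,
    abs_of_nonneg (mul_nonneg p.1.2.1 hr)]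

theorem exists_diskParam_eq {c w : ℂ} {r : ℝ} (hr : 0 < r) (hw : w ∈ closedBall c r) :
    ∃ p : I × I, diskParam c r p = w := by
  obtain ⟨t, ht⟩ :=
    exists_unitInterval_circleMap_eq (mem_sphere.2 (abs_dist (a := w) (b := c)).symm)
  refine ⟨(⟨dist w c / r, by positivity, div_le_one_of_le₀ (mem_closedBall.1 hw) hr.le⟩, t), ?_⟩
  simp only [diskParam, div_mul_cancel₀ _ hr.ne', ht]

theorem Path.Homotopy.eq_of_diskParam_eq {Y : Type*} [TopologicalSpace Y] {y : Y}
    {γ : Path y y} (F : (Path.refl y).Homotopy γ) {c : ℂ} {r : ℝ} (hr : 0 < r) {p q : I × I}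
    (h : diskParam c r p = diskParam c r q) : F p = F q := by
  obtain ⟨u, t⟩ := p
  obtain ⟨u', t'⟩ := q
  obtain rfl : u = u' := by
    ext
    simpa [dist_diskParam hr.le, hr.ne'] using congrArg (dist · c) h
  obtain rfl | hu := eq_or_ne u 0
  · simp
  have hur : (u : ℝ) * r ≠ 0 := mul_ne_zero (fun h => hu (Subtype.ext h)) hr.ne'
  rcases eq_or_of_circleMap_eq hur h with rfl | ⟨rfl, rfl⟩ | ⟨rfl, rfl⟩ <;> simp

theorem exists_extension_closedBall_of_sphere {Y : Type*} [TopologicalSpace Y]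
    [SimplyConnectedSpace Y] (c : ℂ) {r : ℝ} (hr : 0 < r) (f : C(sphere c r, Y)) :
    ∃ φ : C(closedBall c r, Y), ∀ w : sphere c r,
      φ (Set.inclusion sphere_subset_closedBall w) = f w := by
  let e (θ : ℝ) : sphere c r := ⟨circleMap c r θ, circleMap_mem_sphere c hr.le θ⟩
  let γ : Path (f (e 0)) (f (e 0)) :=
    { toFun := fun t => f (e (2 * π * t))
      source' := by simp
      target' := by
        have h2π : circleMap c r (2 * π) = circleMap c r 0 := by
          simpa using periodic_circleMap c r 0
        simp [e, h2π] }
  obtain ⟨F⟩ := SimplyConnectedSpace.paths_homotopic (Path.refl _) γ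
  have hΦ (p : I × I) : diskParam c r p ∈ closedBall c r := by
    rw [mem_closedBall, dist_diskParam hr.le]
    exact mul_le_of_le_one_left hr.le p.1.2.2
  let Φ : C(I × I, closedBall c r) :=
    ⟨fun p => ⟨_, hΦ p⟩, (continuous_diskParam c r).subtype_mk _⟩
  have hq : Topology.IsQuotientMap Φ := by
    refine Φ.continuous.isClosedMap.isQuotientMap Φ.continuous fun w => ?_
    obtain ⟨p, hp⟩ := exists_diskParam_eq hr w.2
    exact ⟨p, Subtype.ext hp⟩
  have hF : Function.FactorsThrough F.toContinuousMap Φ := fun _ _ h =>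
    F.eq_of_diskParam_eq hr (congrArg Subtype.val h)
  refine ⟨hq.lift _ hF, fun w => ?_⟩
  obtain ⟨t, ht⟩ := exists_unitInterval_circleMap_eq (R := r) (by simpa [abs_of_pos hr] using w.2)
  have : Set.inclusion sphere_subset_closedBall w = Φ (1, t) :=
    Subtype.ext (by simp [Φ, diskParam, ht])
  rw [this, ← ContinuousMap.comp_apply, hq.lift_comp _ hF]
  simp [γ, e, ht]

theorem exists_extension_of_closedBall {E Y : Type*} [NormedAddCommGroup E] [NormedSpace ℝ E]
    [TopologicalSpace Y] (c : E) {r : ℝ} (hr : 0 < r) (φ : C(closedBall c r, Y)) :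
    ∃ F : C(E, Y), ∀ w : closedBall c r, F w = φ w := by
  have hmax (w : E) : 0 < max r ‖w - c‖ := lt_max_of_lt_left hr
  have hmem (w : E) : c + (r / max r ‖w - c‖) • (w - c) ∈ closedBall c r := by
    rw [mem_closedBall_iff_norm, add_sub_cancel_left, norm_smul,
      Real.norm_of_nonneg (by positivity), div_mul_eq_mul_div, div_le_iff₀ (hmax w)]
    exact mul_le_mul_of_nonneg_left (le_max_right _ _) hr.le
  have hcont : Continuous fun w => c + (r / max r ‖w - c‖) • (w - c) := by
    fun_prop (disch := exact fun w => (hmax w).ne')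
  let clamp : C(E, closedBall c r) := ⟨fun w => ⟨_, hmem w⟩, hcont.subtype_mk _⟩
  refine ⟨φ.comp clamp, fun w => congrArg φ (Subtype.ext ?_)⟩
  have : max r ‖(w : E) - c‖ = r := max_eq_left (mem_closedBall_iff_norm.1 w.2)
  simp [clamp, this, hr.ne']

def complInclusion {α : Type*} [TopologicalSpace α] {S T : Finset α} (h : S ⊆ T) :
    C({w : α // w ∉ T}, {w : α // w ∉ S}) :=
  ⟨fun x => ⟨x, fun hx => x.2 (h hx)⟩, by fun_prop⟩

theorem exists_extension_across_puncture {Y : Type*} [TopologicalSpace Y]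
    [SimplyConnectedSpace Y] {s₀ : ℂ} {S : Finset ℂ} {ε : ℝ} (hε : 0 < ε)
    (hS : closedBall s₀ ε ⊆ (↑S)ᶜ) (g : C({w : ℂ // w ∉ insert s₀ S}, Y)) :
    ∃ g' : C({w : ℂ // w ∉ S}, Y), ∀ x : {w : ℂ // w ∉ insert s₀ S}, ε ≤ dist (x : ℂ) s₀ →
      g' (complInclusion (S.subset_insert s₀) x) = g x := by
  have hX {w : ℂ} (hw : ε ≤ dist w s₀) (hwS : w ∉ S) : w ∉ insert s₀ S := by
    rw [Finset.mem_insert, not_or]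
    exact ⟨fun h => by rw [h, dist_self] at hw; linarith, hwS⟩
  let f : C(sphere s₀ ε, Y) := g.comp
    ⟨fun w => ⟨w, hX (mem_sphere.1 w.2).ge (hS (sphere_subset_closedBall w.2))⟩, by fun_prop⟩
  obtain ⟨φ, hφ⟩ := exists_extension_closedBall_of_sphere s₀ hε f
  obtain ⟨F, hF⟩ := exists_extension_of_closedBall s₀ hε φ
  have hFg (x : {w : ℂ // w ∉ insert s₀ S}) (hx : dist (x : ℂ) s₀ = ε) : F x = g x :=
    (hF ⟨x, mem_closedBall.2 hx.le⟩).trans (hφ ⟨x, hx⟩)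
  let g' (x : {w : ℂ // w ∉ S}) : Y :=
    if h : dist (x : ℂ) s₀ < ε then F x else g ⟨x, hX (not_lt.1 h) x.2⟩
  have hg'B : ContinuousOn g' {x : {w : ℂ // w ∉ S} | ε ≤ dist (x : ℂ) s₀} := by
    rw [continuousOn_iff_continuous_domRestrict]
    have : domRestrict {x : {w : ℂ // w ∉ S} | ε ≤ dist (x : ℂ) s₀} g' =
        g ∘ fun y => ⟨y.1, hX y.2 y.1.2⟩ :=
      funext fun y => dif_neg (not_lt.2 y.2)
    rw [this]
    exact g.continuous.comp (by fun_prop)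
  have hg'A : ContinuousOn g' {x : {w : ℂ // w ∉ S} | dist (x : ℂ) s₀ ≤ ε} := by
    refine (F.continuous.comp continuous_subtype_val).continuousOn.congr fun x hx => ?_
    rcases (show dist (x : ℂ) s₀ ≤ ε from hx).lt_or_eq with hlt | heq
    · exact dif_pos hlt
    · exact (dif_neg heq.not_lt).trans (hFg _ heq).symm
  have hg' : Continuous g' := by
    rw [← continuousOn_univ]
    convert hg'A.union_of_isClosed hg'B (isClosed_le (by fun_prop) continuous_const)
      (isClosed_le continuous_const (by fun_prop))
    exact (eq_univ_of_forall fun x : {w : ℂ // w ∉ S} => le_total (dist (x : ℂ) s₀) ε).symm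
  exact ⟨⟨g', hg'⟩, fun x hx => dif_neg (not_lt.2 hx)⟩

theorem homotopic_const_of_eq_outside_ball {E Y : Type*} [NormedAddCommGroup E] [NormedSpace ℝ E]
    [DecidableEq E] [TopologicalSpace Y] {s₀ : E} {S : Finset E} {ε : ℝ}
    (hS : closedBall s₀ ε ⊆ (↑S)ᶜ)
    (h : C({w : E // w ∉ insert s₀ S}, Y)) {y : Y}
    (hy : ∀ x : {w : E // w ∉ insert s₀ S}, ε ≤ dist (x : E) s₀ → h x = y) :
    h.Homotopic (const _ y) := by
  have hd (x : {w : E // w ∉ insert s₀ S}) : 0 < dist (x : E) s₀ :=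
    dist_pos.2 fun hx => x.2 (Finset.mem_insert.2 (Or.inl hx))
  let ρ (p : I × {w : E // w ∉ insert s₀ S}) : ℝ := max (dist (p.2 : E) s₀) (p.1 * ε)
  let P (p : I × {w : E // w ∉ insert s₀ S}) : E :=
    s₀ + (ρ p / dist (p.2 : E) s₀) • ((p.2 : E) - s₀)
  have hPdist p : dist (P p) s₀ = ρ p := by
    rw [dist_eq_norm, add_sub_cancel_left, norm_smul, ← dist_eq_norm,
      Real.norm_of_nonneg (div_nonneg ((hd p.2).le.trans (le_max_left _ _)) dist_nonneg),
      div_mul_cancel₀ _ (hd p.2).ne']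
  have hP_of_eq p (hp : ρ p = dist (p.2 : E) s₀) : P p = p.2 := by
    simp [P, hp, div_self (hd p.2).ne']
  have hP p : P p ∉ insert s₀ S := by
    rw [Finset.mem_insert, not_or]
    refine ⟨dist_pos.1 ?_, fun hpS => ?_⟩
    · rw [hPdist]
      exact (hd p.2).trans_le (le_max_left _ _)
    rcases le_total (p.1 * ε : ℝ) (dist (p.2 : E) s₀) with hle | hle
    · rw [hP_of_eq p (max_eq_left hle)] at hpS
      exact p.2.2 (Finset.mem_insert_of_mem hpS)
    · have hε : 0 ≤ ε := by
        by_contra! hε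
        nlinarith [hd p.2, p.1.2.1]
      refine hS (mem_closedBall.2 ?_) hpS
      rw [hPdist, show ρ p = p.1 * ε from max_eq_right hle]
      exact mul_le_of_le_one_left hε p.1.2.2
  refine ⟨⟨⟨fun p => h ⟨P p, hP p⟩, h.continuous.comp ?_⟩, fun x => ?_, fun x => ?_⟩⟩
  · exact Continuous.subtype_mk (by fun_prop (disch := exact fun p => (hd p.2).ne')) _
  · simp [hP_of_eq (0, x) (by simp [ρ, (hd x).le])]
  · exact hy _ ((hPdist (1, x)).ge.trans' (by simp [ρ]))

theorem homotopic_const_one_of_compl_finset {G : Type*} [TopologicalSpace G] [Group G]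
    [IsTopologicalGroup G] [SimplyConnectedSpace G] (S : Finset ℂ)
    (g : C({w : ℂ // w ∉ S}, G)) : g.Homotopic (const _ 1) := by
  induction S using Finset.induction_on with
  | empty =>
    have hconv : Convex ℝ {w : ℂ | w ∉ (∅ : Finset ℂ)} := by simpa using convex_univ
    have : ContractibleSpace {w : ℂ // w ∉ (∅ : Finset ℂ)} := hconv.contractibleSpace ⟨0, by simp⟩
    exact homotopic_const_of_contractibleSpace g 1
  | @insert s₀ S hs₀ ih =>
    obtain ⟨ε, hε, hS⟩ :=
      nhds_basis_closedBall.mem_iff.1 (S.isClosed.isOpen_compl.mem_nhds hs₀)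
    obtain ⟨g', hg'⟩ := exists_extension_across_puncture hε hS g
    let ι := complInclusion (S.subset_insert s₀)
    have hι : (g'.comp ι).Homotopic (const _ 1) := (ih g').comp (.refl ι)
    have hh : ((g'.comp ι)⁻¹ * g).Homotopic (const _ 1) :=
      homotopic_const_of_eq_outside_ball hS _ fun x hx => by simp [ι, hg' x hx]
    simpa using hι.mul hh

theorem homotopyRel_to_const_of_simplyConnected_general (S z : Finset ℂ)
    {G : Type*} [TopologicalSpace G] [Group G] [IsTopologicalGroup G] [SimplyConnectedSpace G]
    (g : C({w : ℂ // w ∉ S}, G)) (hg : ∀ c : {w : ℂ // w ∉ S}, (c : ℂ) ∈ z → g c = 1) :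
    Nonempty (ContinuousMap.HomotopyRel g (ContinuousMap.const {w : ℂ // w ∉ S} 1)
      {c : {w : ℂ // w ∉ S} | (c : ℂ) ∈ z}) :=
  (homotopic_const_one_of_compl_finset S g).homotopicRel_of_finite
    (z.finite_toSet.preimage Subtype.val_injective.injOn) hg

/-- Lemma 2.8: for a simply connected topological group `G` and `C = ℂ ∖ S`,
every continuous map `C → G` sending the finite set `z` (disjoint from `S`) to the identity
is homotopic to the constant map `1` relative to `z`. -/
theorem homotopyRel_to_const_of_simplyConnected (S z : Finset ℂ)
    (hdisj : (↑z : Set ℂ) ∩ (↑S : Set ℂ) = ∅)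
    {G : Type*} [TopologicalSpace G] [Group G] [IsTopologicalGroup G] [SimplyConnectedSpace G]
    (g : C({w : ℂ // w ∉ S}, G)) (hg : ∀ c : {w : ℂ // w ∉ S}, (c : ℂ) ∈ z → g c = 1) :
    Nonempty (ContinuousMap.HomotopyRel g (ContinuousMap.const {w : ℂ // w ∉ S} 1)
      {c : {w : ℂ // w ∉ S} | (c : ℂ) ∈ z}) :=
  homotopyRel_to_const_of_simplyConnected_general S z g hg
end

section
/- Let V be a vector space over ℂ and let B : V →ₗ[ℂ] V →ₗ[ℂ] ℂ be a bilinear form which is separating in the left entry, i.e. for every v : V, if B v w = 0 for all w : V then v = 0. Let n : ℕ with 1 ≤ n, and let k : Fin n → ℂ with k ⟨n - 1, by omega⟩ ≠ 0. Define B̂ : (Fin n → V) → (Fin n → V) → ℂ by B̂ X Y = ∑_{p : Fin n} ∑_{q : Fin n} (if h : (p : ℕ) + (q : ℕ) < n then k ⟨(p : ℕ) + (q : ℕ), h⟩ * B (X p) (Y q) else 0). Then B̂ is separating in the left entry: for every X : Fin n → V, if B̂ X Y = 0 for all Y : Fin n → V, then X = 0. -/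
/-- Non-degeneracy of the Weil-algebra-valued bilinear form built from the Laurent
coefficients `k` of a meromorphic 1-form at a pole of order `n`, given `k (n-1) ≠ 0`. -/
theorem weil_bilinear_form_separating_left {V : Type*} [AddCommGroup V] [Module ℂ V]
    (B : V →ₗ[ℂ] V →ₗ[ℂ] ℂ) (hB : ∀ v : V, (∀ w : V, B v w = 0) → v = 0)
    (n : ℕ) (hn : 1 ≤ n) (k : Fin n → ℂ) (hk : k ⟨n - 1, by omega⟩ ≠ 0)
    (X : Fin n → V)
    (hX : ∀ Y : Fin n → V,
      (∑ p : Fin n, ∑ q : Fin n,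
        if h : (p : ℕ) + (q : ℕ) < n then k ⟨(p : ℕ) + (q : ℕ), h⟩ * B (X p) (Y q) else 0)
      = 0) :
    X = 0 := by
  have key : ∀ q : Fin n,
      (∑ p : Fin n, if h : (p : ℕ) + (q : ℕ) < n then k ⟨(p : ℕ) + (q : ℕ), h⟩ • X p else 0)
        = 0 := by
    intro q
    apply hB
    intro w
    have h1 := hX (fun q' => if q' = q then w else 0)
    have h2 : ∀ p : Fin n,
        (∑ q' : Fin n, if h : (p : ℕ) + (q' : ℕ) < n then
            k ⟨(p : ℕ) + (q' : ℕ), h⟩ * B (X p) (if q' = q then w else 0) else 0)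
        = (if h : (p : ℕ) + (q : ℕ) < n then k ⟨(p : ℕ) + (q : ℕ), h⟩ * B (X p) w else 0) := by
      intro p
      rw [Finset.sum_eq_single q]
      · simp
      · intro q' _ hq'
        simp [hq']
      · simp
    rw [Finset.sum_congr rfl (fun p _ => h2 p)] at h1
    rw [map_sum, LinearMap.sum_apply]
    rw [← h1]
    apply Finset.sum_congr rfl
    intro p _
    by_cases h : (p : ℕ) + (q : ℕ) < n <;> simp [h]
  have hzero : ∀ m : ℕ, ∀ hm : m < n, X ⟨m, hm⟩ = 0 := by
    intro m
    induction m using Nat.strong_induction_on with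
    | _ m ih =>
      intro hm
      have hq : n - 1 - m < n := by omega
      have hv := key ⟨n - 1 - m, hq⟩
      rw [Finset.sum_eq_single (⟨m, hm⟩ : Fin n)] at hv
      · have hlt : m + (n - 1 - m) < n := by omega
        rw [dif_pos hlt] at hv
        have hidx : (⟨m + (n - 1 - m), hlt⟩ : Fin n) = ⟨n - 1, by omega⟩ := by
          ext; simp; omega
        rw [hidx] at hv
        rcases smul_eq_zero.mp hv with h | h
        · exact absurd h hk
        · exact h
      · intro p _ hp
        rcases lt_trichotomy (p : ℕ) m with h | h | h
        · have : X p = 0 := by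
            have := ih p h (by omega)
            simpa [Fin.eta] using this
          simp [this]
        · exact absurd (Fin.ext h) hp
        · have : ¬ ((p : ℕ) + (n - 1 - m) < n) := by omega
          simp [this]
      · simp
  funext p
  have := hzero p p.isLt
  simpa [Fin.eta] using this
end

section
/- Let z, ζ : Finset ℂ with (↑z : Set ℂ) ∩ (↑ζ : Set ℂ) = ∅, let n : ℂ → ℕ, m : ℂ → ℕ, and m∞ : ℕ. Let Q : Polynomial ℂ with Q.natDegree ≤ ∑_{y ∈ ζ} m y + m∞, and suppose ∑_{x ∈ z} n x = ∑_{y ∈ ζ} m y + m∞ + 2. Define f : ℂ → ℂ by f w = Polynomial.eval w Q / ∏_{y ∈ ζ} (w - y)^(m y). If for every x ∈ z and every p < n x one has iteratedDeriv p f x = 0 (iterated derivative over ℂ), then Q = 0, and hence f = 0. -/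
/-!
Near a pole `x ∈ z` of `ω` the denominator `∏ (w - y) ^ m y` is analytic and nonzero, so the
vanishing of the jet of `f` up to order `n x` says that `f` — and hence the polynomial `Q` — has
analytic order at least `n x` at `x`. For a polynomial the analytic order is the root multiplicity,
so a nonzero `Q` would have at least `∑ n x ≥ deg Q + 2` roots counted with multiplicity.
-/

namespace Polynomial

variable {𝕜 : Type*} [NontriviallyNormedField 𝕜]

theorem analyticOrderAt_eval {p : 𝕜[X]} (hp : p ≠ 0) (x : 𝕜) :
    analyticOrderAt (fun w => p.eval w) x = p.rootMultiplicity x := by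
  refine ((AnalyticOnNhd.eval_polynomial p) x trivial).analyticOrderAt_eq_natCast.2
    ⟨fun w => (p /ₘ (X - C x) ^ p.rootMultiplicity x).eval w,
      (AnalyticOnNhd.eval_polynomial _) x trivial,
      eval_divByMonic_pow_rootMultiplicity_ne_zero x hp, Filter.Eventually.of_forall fun w => ?_⟩
  conv_lhs => rw [← pow_mul_divByMonic_rootMultiplicity_eq p x]
  simp

theorem le_rootMultiplicity_of_iteratedDeriv_div_eq_zero [CharZero 𝕜] [CompleteSpace 𝕜]
    {p : 𝕜[X]} {g : 𝕜 → 𝕜} {x : 𝕜} {k : ℕ} (hp : p ≠ 0) (hg : AnalyticAt 𝕜 g x)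
    (hgx : g x ≠ 0) (hjet : ∀ i < k, iteratedDeriv i (fun w => p.eval w / g w) x = 0) :
    k ≤ p.rootMultiplicity x := by
  have hpa : AnalyticAt 𝕜 (fun w => p.eval w) x := (AnalyticOnNhd.eval_polynomial p) x trivial
  have horder : analyticOrderAt ((fun w => p.eval w) * g⁻¹) x = p.rootMultiplicity x := by
    rw [analyticOrderAt_mul hpa (hg.inv hgx),
      (analyticOrderAt_eq_zero (f := g⁻¹)).2 (.inr (inv_ne_zero hgx)), add_zero,
      analyticOrderAt_eval hp]
  have := (natCast_le_analyticOrderAt_iff_iteratedDeriv_eq_zero (hpa.div hg hgx)).2 hjet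
  rwa [div_eq_mul_inv, horder, Nat.cast_le] at this

theorem sum_rootMultiplicity_le_natDegree {R : Type*} [CommRing R] [IsDomain R]
    [DecidableEq R] (p : R[X]) (s : Finset R) :
    ∑ x ∈ s, p.rootMultiplicity x ≤ p.natDegree :=
  calc ∑ x ∈ s, p.rootMultiplicity x
      = ∑ x ∈ s, p.roots.count x := by simp only [count_roots]
    _ ≤ ∑ x ∈ s ∪ p.roots.toFinset, p.roots.count x :=
        Finset.sum_le_sum_of_subset Finset.subset_union_left
    _ = Multiset.card p.roots :=
        Multiset.sum_count_eq_card fun _ ha => Finset.mem_union_right _ (Multiset.mem_toFinset.2 ha)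
    _ ≤ p.natDegree := card_roots' p

end Polynomial

/-- Lemma 5.3 (scalar form): a function `f = Q / ∏_{y ∈ ζ} (· - y)^{m y}` meromorphic with
poles at `ζ` of bounded order, whose holomorphic jets up to order `n x - 1` vanish at each
pole `x ∈ z` of the 1-form `ω`, must vanish identically (i.e. the jet map is injective). -/
theorem jet_map_injective_meromorphic (z ζ : Finset ℂ)
    (hdisj : (↑z : Set ℂ) ∩ (↑ζ : Set ℂ) = ∅)
    (n m : ℂ → ℕ) (mInf : ℕ) (Q : Polynomial ℂ)
    (hdeg : Q.natDegree ≤ (∑ y ∈ ζ, m y) + mInf)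
    (hsum : ∑ x ∈ z, n x = (∑ y ∈ ζ, m y) + mInf + 2)
    (f : ℂ → ℂ) (hf : f = fun w => Polynomial.eval w Q / ∏ y ∈ ζ, (w - y) ^ (m y))
    (hjet : ∀ x ∈ z, ∀ p < n x, iteratedDeriv p f x = 0) :
    Q = 0 ∧ f = 0 := by
  classical
  have hden : ∀ x ∈ z, ∏ y ∈ ζ, (x - y) ^ m y ≠ 0 := fun x hx =>
    Finset.prod_ne_zero_iff.2 fun y hy => pow_ne_zero _ <| sub_ne_zero.2 fun hxy =>
      (Set.disjoint_iff_inter_eq_empty.2 hdisj).notMem_of_mem_left hx (hxy ▸ hy)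
  have hQ : Q = 0 := by
    by_contra hQ
    have hmult : ∀ x ∈ z, n x ≤ Q.rootMultiplicity x := fun x hx =>
      Polynomial.le_rootMultiplicity_of_iteratedDeriv_div_eq_zero hQ (by fun_prop) (hden x hx)
        (hf ▸ hjet x hx)
    have := (Finset.sum_le_sum hmult).trans (Q.sum_rootMultiplicity_le_natDegree z)
    omega
  subst hf hQ
  exact ⟨rfl, funext fun w => by simp⟩
end
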